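/- Let H be an inner product space over 𝕜 (𝕜 = ℝ or ℂ), x, y, e ∈ H with ‖e‖ = 1, and real numbers a, A, b, B with A > a > 0 and B > b > 0. If ‖x − ((a+A)/2)e‖ ≤ (1/2)(A − a) and ‖y − ((b+B)/2)e‖ ≤ (1/2)(B − b), then |⟨x,y⟩ − ⟨x,e⟩⟨e,y⟩| ≤ (1/4)·((A − a)(B − b)/√(abAB))·|⟨x,e⟩⟨e,y⟩|. -/

import Mathlib

/-!
Put `u = x - ⟪e, x⟫ e` and `v = y - ⟪e, y⟫ e`; then `⟪x, y⟫ - ⟪x, e⟫⟪e, y⟫ = ⟪u, v⟫`, which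
Cauchy–Schwarz bounds by `‖u‖ ‖v‖`. Expanding the hypothesis on `x` gives
`‖x‖² ≤ (a + A) |⟪e, x⟫| - a A`, and since `‖u‖² = ‖x‖² - |⟪e, x⟫|²`, completing a square yields
`‖u‖ ≤ (A - a) / (2 √(a A)) · |⟪e, x⟫|`; likewise for `v`.
-/

open RCLike

/-- The difference of the two sides is `((a + A) * s - 2 * a * A) ^ 2 / (4 * a * A)`. -/
theorem add_mul_sub_mul_sub_sq_le {a A : ℝ} (haA : 0 < a * A) (s : ℝ) :
    (a + A) * s - a * A - s ^ 2 ≤ (A - a) ^ 2 / (4 * (a * A)) * s ^ 2 := by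
  rw [div_mul_eq_mul_div, le_div_iff₀ (by positivity)]
  nlinarith [sq_nonneg ((a + A) * s - 2 * (a * A))]

section UnitVector

variable {𝕜 H : Type*} [RCLike 𝕜] [SeminormedAddCommGroup H] [InnerProductSpace 𝕜 H] {e : H}

theorem inner_sub_inner_smul_sub_inner_smul (he : ‖e‖ = 1) (x y : H) :
    inner 𝕜 (x - inner 𝕜 e x • e) (y - inner 𝕜 e y • e) =
      inner 𝕜 x y - inner 𝕜 x e * inner 𝕜 e y := by
  simp only [inner_sub_left, inner_sub_right, inner_smul_left, inner_smul_right,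
    inner_self_eq_norm_sq_to_K, he, inner_conj_symm, ofReal_one, one_pow, mul_one]
  ring

theorem norm_sub_inner_smul_sq (he : ‖e‖ = 1) (x : H) :
    ‖x - inner 𝕜 e x • e‖ ^ 2 = ‖x‖ ^ 2 - ‖inner 𝕜 e x‖ ^ 2 := by
  have h := congrArg re (inner_sub_inner_smul_sub_inner_smul (𝕜 := 𝕜) he x x)
  rwa [map_sub, inner_mul_symm_re_eq_norm, norm_mul, norm_inner_symm x e, ← sq,
    inner_self_eq_norm_sq, inner_self_eq_norm_sq] at h

theorem norm_sub_ofReal_smul_sq (he : ‖e‖ = 1) (x : H) (c : ℝ) :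
    ‖x - (c : 𝕜) • e‖ ^ 2 = ‖x‖ ^ 2 - 2 * c * re (inner 𝕜 e x) + c ^ 2 := by
  rw [@norm_sub_sq 𝕜, inner_smul_right, norm_smul, he, RCLike.norm_ofReal, RCLike.re_ofReal_mul,
    inner_re_symm, mul_one, sq_abs]
  ring

theorem norm_sub_inner_smul_le_of_norm_sub_smul_le {x : H} (he : ‖e‖ = 1) {a A : ℝ}
    (ha : 0 < a) (hx : ‖x - (((a + A) / 2 : ℝ) : 𝕜) • e‖ ≤ (1 / 2) * (A - a)) :
    ‖x - inner 𝕜 e x • e‖ ≤ (A - a) / (2 * √(a * A)) * ‖inner 𝕜 e x‖ := by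
  have hAa : 0 ≤ A - a := by linarith [norm_nonneg (x - (((a + A) / 2 : ℝ) : 𝕜) • e)]
  have haA : 0 < a * A := by nlinarith
  have hx_sq : ‖x‖ ^ 2 ≤ (a + A) * ‖inner 𝕜 e x‖ - a * A := by
    have h := norm_sub_ofReal_smul_sq (𝕜 := 𝕜) he x ((a + A) / 2)
    nlinarith [pow_le_pow_left₀ (norm_nonneg _) hx 2, re_le_norm (inner 𝕜 e x)]
  rw [← pow_le_pow_iff_left₀ (norm_nonneg _) (by positivity) two_ne_zero, norm_sub_inner_smul_sq he,
    mul_pow, div_pow, mul_pow, Real.sq_sqrt haA.le]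
  linarith [add_mul_sub_mul_sub_sq_le haA ‖inner 𝕜 e x‖]

end UnitVector

theorem gruss_companion_real_bounds_general {𝕜 H : Type*} [RCLike 𝕜] [NormedAddCommGroup H]
    [InnerProductSpace 𝕜 H] (x y e : H) (he : ‖e‖ = 1) (a A b B : ℝ)
    (ha : 0 < a) (hb : 0 < b)
    (hx : ‖x - (((a + A) / 2 : ℝ) : 𝕜) • e‖ ≤ (1 / 2) * (A - a))
    (hy : ‖y - (((b + B) / 2 : ℝ) : 𝕜) • e‖ ≤ (1 / 2) * (B - b)) :
    ‖(inner 𝕜 x y : 𝕜) - (inner 𝕜 x e : 𝕜) * (inner 𝕜 e y : 𝕜)‖ ≤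
      (1 / 4 : ℝ) * ((A - a) * (B - b) / Real.sqrt (a * b * A * B)) *
        ‖(inner 𝕜 x e : 𝕜) * (inner 𝕜 e y : 𝕜)‖ := by
  have hu := norm_sub_inner_smul_le_of_norm_sub_smul_le he ha hx
  have hv := norm_sub_inner_smul_le_of_norm_sub_smul_le he hb hy
  have hbB : 0 ≤ b * B := by nlinarith [norm_nonneg (y - (((b + B) / 2 : ℝ) : 𝕜) • e)]
  calc ‖(inner 𝕜 x y : 𝕜) - (inner 𝕜 x e : 𝕜) * (inner 𝕜 e y : 𝕜)‖
      = ‖inner 𝕜 (x - inner 𝕜 e x • e) (y - inner 𝕜 e y • e)‖ := by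
        rw [inner_sub_inner_smul_sub_inner_smul he]
    _ ≤ ‖x - inner 𝕜 e x • e‖ * ‖y - inner 𝕜 e y • e‖ := norm_inner_le_norm _ _
    _ ≤ ((A - a) / (2 * √(a * A)) * ‖inner 𝕜 e x‖) * ((B - b) / (2 * √(b * B)) * ‖inner 𝕜 e y‖) :=
        mul_le_mul hu hv (norm_nonneg _) ((norm_nonneg _).trans hu)
    _ = (1 / 4 : ℝ) * ((A - a) * (B - b) / Real.sqrt (a * b * A * B)) *
        ‖(inner 𝕜 x e : 𝕜) * (inner 𝕜 e y : 𝕜)‖ := by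
        rw [norm_mul, norm_inner_symm x e, show a * b * A * B = (a * A) * (b * B) by ring,
          Real.sqrt_mul' (a * A) hbB]
        ring

/-- **A Grüss type inequality with positive real bounds** (Corollary 3). -/
theorem gruss_companion_real_bounds {𝕜 H : Type*} [RCLike 𝕜] [NormedAddCommGroup H]
    [InnerProductSpace 𝕜 H] (x y e : H) (he : ‖e‖ = 1) (a A b B : ℝ)
    (ha : 0 < a) (haA : a < A) (hb : 0 < b) (hbB : b < B)
    (hx : ‖x - (((a + A) / 2 : ℝ) : 𝕜) • e‖ ≤ (1 / 2) * (A - a))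
    (hy : ‖y - (((b + B) / 2 : ℝ) : 𝕜) • e‖ ≤ (1 / 2) * (B - b)) :
    ‖(inner 𝕜 x y : 𝕜) - (inner 𝕜 x e : 𝕜) * (inner 𝕜 e y : 𝕜)‖ ≤
      (1 / 4 : ℝ) * ((A - a) * (B - b) / Real.sqrt (a * b * A * B)) *
        ‖(inner 𝕜 x e : 𝕜) * (inner 𝕜 e y : 𝕜)‖ :=
  gruss_companion_real_bounds_general x y e he a A b B ha hb hx hy
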